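/- arXiv:1305.6873 — 5 statements merged into one kernel-verified Lean document; each statement's English description precedes it below -/
import Mathlib

section
/- Let X, X₁, X₂ be as in the context. Then for every k with 0 ≤ k ≤ m, the coefficient of z^k in det(I + z·X) equals Σ_{a=0}^{k} trΛ^a(X₁)·trΛ^{k−a}(X₂). (Lemma 'block 1(i)': on the Slodowy slice the first m characteristic-polynomial coefficients of X are the convolution of those of its diagonal blocks.) -/
open Polynomial

/-- `trΛ^k(M)`: the coefficient of `z^k` in `det(I + z·M)`. -/
noncomputable def trLambda {N : ℕ} (M : Matrix (Fin N) (Fin N) ℂ) (k : ℕ) : ℂ :=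
  ((1 + (Polynomial.X : ℂ[X]) • M.map Polynomial.C).det).coeff k

/-!
Reorder the indices so that `X` is the block matrix `[[X₁, B], [C, X₂]]`, where `B` is supported on
the first column and `C` on the last row. Modulo `z ^ (m + 1)` the block `I + z X₂` is invertible,
so by the Schur complement `det (I + z X) = det (I + z X₂) * det (I + z X₁ - z² B (I + z X₂)⁻¹ C)`.
Only the `(1, m)` entry of `(I + z X₂)⁻¹` enters the correction term, and since `I + z X₂` is lower
Hessenberg with superdiagonal `z`, the corresponding cofactor is `± z ^ (m - 1)`. The correction is
therefore divisible by `z ^ (m + 1)`, so `det (I + z X) ≡ det (I + z X₁) * det (I + z X₂)` modulo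
`z ^ (m + 1)`.
-/

open Matrix

variable {R : Type*} [CommRing R] {ι : Type*} [Fintype ι] [DecidableEq ι]

theorem adjugate_apply_zero_last_of_hessenberg {m : ℕ} (D : Matrix (Fin (m + 1)) (Fin (m + 1)) R)
    (hD : ∀ a b : Fin (m + 1), a.val + 2 ≤ b.val → D a b = 0) :
    adjugate D 0 (Fin.last m) = (-1) ^ m * ∏ a : Fin m, D a.castSucc a.succ := by
  have htri : (D.submatrix Fin.castSucc Fin.succ).BlockTriangular OrderDual.toDual :=
    fun a b hab => hD _ _ (by simp [Fin.val_succ]; exact hab)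
  rw [adjugate_fin_succ_eq_det_submatrix, Fin.succAbove_last, Fin.succAbove_zero,
    det_of_isLowerTriangular _ htri]
  simp

theorem det_fromBlocks_eq_det_mul_det_of_pow_eq_zero {m : ℕ} {z : R} (hz : z ^ (m + 2) = 0)
    (A : Matrix ι ι R) (B : Matrix ι (Fin (m + 1)) R)
    (C : Matrix (Fin (m + 1)) ι R) (D : Matrix (Fin (m + 1)) (Fin (m + 1)) R)
    (hB : ∀ i a, a ≠ 0 → B i a = 0) (hC : ∀ a j, a ≠ Fin.last m → C a j = 0)
    (hD : ∀ a b : Fin (m + 1), a.val + 2 ≤ b.val → D a b = 0)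
    (hD₁ : ∀ a : Fin m, D a.castSucc a.succ = 1) :
    det (fromBlocks A (z • B) (z • C) (1 + z • D)) = det A * det (1 + z • D) := by
  have hnil : IsNilpotent (z • D) := ⟨m + 2, by rw [_root_.smul_pow, hz, zero_smul]⟩
  let := hnil.isUnit_one_add.invertible
  have hadj : z ^ 2 * adjugate (1 + z • D) 0 (Fin.last m) = 0 := by
    rw [adjugate_apply_zero_last_of_hessenberg]
    · have hsuper : ∀ a : Fin m, (1 + z • D) a.castSucc a.succ = z := fun a => by
        simp [one_apply_ne (Fin.castSucc_lt_succ (i := a)).ne, hD₁]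
      simp only [hsuper, Finset.prod_const, Finset.card_univ, Fintype.card_fin]
      linear_combination (-1) ^ m * hz
    · intro a b hab
      simp [one_apply_ne (show a ≠ b by omega), hD a b hab]
  have hcoupling : z • B * ⅟(1 + z • D) * z • C = 0 := by
    ext i j
    simp only [mul_apply, Matrix.smul_apply, smul_eq_mul]
    rw [Fintype.sum_eq_single (Fin.last m) fun a ha => by simp [hC a j ha],
      Fintype.sum_eq_single 0 fun a ha => by simp [hB i a ha], invOf_eq_nonsing_inv, inv_def]
    simp only [Matrix.smul_apply, smul_eq_mul, Matrix.zero_apply]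
    linear_combination (B i 0 * C (Fin.last m) j * Ring.inverse (1 + z • D).det) * hadj
  rw [det_fromBlocks₂₂, hcoupling, sub_zero, mul_comm]

theorem Polynomial.coeff_eq_of_X_pow_dvd_sub {p q : R[X]} {N k : ℕ}
    (h : X ^ N ∣ p - q) (hk : k < N) : p.coeff k = q.coeff k :=
  sub_eq_zero.mp (by simpa only [coeff_sub] using X_pow_dvd_iff.mp h k hk)

theorem RingHom.mapMatrix_one_add_X_smul_map_C {S : Type*} [CommRing S] (f : R[X] →+* S)
    (M : Matrix ι ι R) :
    f.mapMatrix (1 + (X : R[X]) • M.map C) = 1 + f X • M.map (f.comp C) := by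
  ext i j
  by_cases h : i = j <;> simp [h] <;> ring

theorem coeff_zero_det_one_add_X_smul (M : Matrix ι ι R) :
    (det (1 + (X : R[X]) • M.map C)).coeff 0 = 1 := by
  rw [coeff_zero_eq_eval_zero, ← coe_evalRingHom, RingHom.map_det,
    RingHom.mapMatrix_one_add_X_smul_map_C]
  simp

theorem det_one_add_X_smul_submatrix {κ : Type*} [Fintype κ] [DecidableEq κ] (M : Matrix ι ι R)
    (e : κ ≃ ι) :
    det (1 + (X : R[X]) • (M.submatrix e e).map C) = det (1 + (X : R[X]) • M.map C) := by
  rw [← det_submatrix_equiv_self e (1 + (X : R[X]) • M.map C)]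
  congr 1
  ext i j
  simp [one_apply]

theorem X_pow_dvd_det_one_add_X_smul_fromBlocks_sub {m : ℕ} (A : Matrix ι ι R)
    (B : Matrix ι (Fin (m + 1)) R) (C' : Matrix (Fin (m + 1)) ι R)
    (D : Matrix (Fin (m + 1)) (Fin (m + 1)) R)
    (hB : ∀ i a, a ≠ 0 → B i a = 0) (hC : ∀ a j, a ≠ Fin.last m → C' a j = 0)
    (hD : ∀ a b : Fin (m + 1), a.val + 2 ≤ b.val → D a b = 0)
    (hD₁ : ∀ a : Fin m, D a.castSucc a.succ = 1) :
    (X : R[X]) ^ (m + 2) ∣ det (1 + (X : R[X]) • (fromBlocks A B C' D).map C)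
      - det (1 + (X : R[X]) • A.map C) * det (1 + (X : R[X]) • D.map C) := by
  set π := Ideal.Quotient.mk (Ideal.span {(X : R[X]) ^ (m + 2)})
  set φ := π.comp C
  have hz : π X ^ (m + 2) = 0 := by
    rw [← map_pow, Ideal.Quotient.eq_zero_iff_mem]
    exact Ideal.mem_span_singleton_self _
  have hblocks : 1 + π X • (fromBlocks A B C' D).map φ
      = fromBlocks (1 + π X • A.map φ) (π X • B.map φ) (π X • C'.map φ) (1 + π X • D.map φ) := by
    rw [fromBlocks_map, fromBlocks_smul, ← fromBlocks_one, fromBlocks_add, zero_add, zero_add]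
  rw [← Ideal.mem_span_singleton, ← Ideal.Quotient.mk_eq_mk_iff_sub_mem, map_mul]
  simp only [RingHom.map_det, RingHom.mapMatrix_one_add_X_smul_map_C]
  rw [hblocks]
  refine det_fromBlocks_eq_det_mul_det_of_pow_eq_zero hz _ _ _ _ (fun i a ha => ?_)
    (fun a j ha => ?_) (fun a b hab => ?_) (fun a => ?_)
  · simp [hB i a ha]
  · simp [hC a j ha]
  · simp [hD a b hab]
  · simp [hD₁ a]

theorem block1_i (n m : ℕ)
    (Xm : Matrix (Fin (n + m)) (Fin (n + m)) ℂ)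
    (h1 : ∀ i j : Fin (n + m), i.val < n → n + 1 ≤ j.val → Xm i j = 0)
    (h2 : ∀ i j : Fin (n + m), n ≤ i.val → i.val < n + m - 1 → j.val < n → Xm i j = 0)
    (h3 : ∀ i j : Fin (n + m), n ≤ i.val → n ≤ j.val → i.val + 2 ≤ j.val → Xm i j = 0)
    (h4 : ∀ i j : Fin (n + m), n ≤ i.val → j.val = i.val + 1 → Xm i j = 1)
    (X₁ : Matrix (Fin n) (Fin n) ℂ)
    (hX₁ : ∀ i j : Fin n, X₁ i j = Xm (Fin.castLE (by omega) i) (Fin.castLE (by omega) j))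
    (X₂ : Matrix (Fin m) (Fin m) ℂ)
    (hX₂ : ∀ a b : Fin m, X₂ a b = Xm (Fin.natAdd n a) (Fin.natAdd n b)) :
    ∀ k : ℕ, k ≤ m →
      trLambda Xm k = ∑ a ∈ Finset.range (k + 1), trLambda X₁ a * trLambda X₂ (k - a) := by
  intro k hk
  rcases m with _ | m
  · obtain rfl : k = 0 := by omega
    simp [trLambda, coeff_zero_det_one_add_X_smul]
  set W := Xm.submatrix finSumFinEquiv finSumFinEquiv
  have hW : W = fromBlocks X₁ W.toBlocks₁₂ W.toBlocks₂₁ X₂ := by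
    conv_lhs => rw [← fromBlocks_toBlocks W]
    congr 1 <;> ext i j
    · simp only [W, toBlocks₁₁, of_apply, submatrix_apply, finSumFinEquiv_apply_left, hX₁]
      rfl
    · simp [W, toBlocks₂₂, hX₂]
  have hdvd := X_pow_dvd_det_one_add_X_smul_fromBlocks_sub X₁ W.toBlocks₁₂ W.toBlocks₂₁ X₂
    (fun i a ha => h1 _ _ (by simp) (by have := Fin.pos_iff_ne_zero.mpr ha; simp; omega))
    (fun a j ha => h2 _ _ (by simp) (by simp [Fin.val_lt_last ha]) (by simp))
    (fun a b hab => by rw [hX₂]; exact h3 _ _ (by simp) (by simp) (by simp; omega))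
    (fun a => by rw [hX₂]; exact h4 _ _ (by simp) (by simp [add_assoc]))
  rw [← hW, det_one_add_X_smul_submatrix] at hdvd
  rw [trLambda, coeff_eq_of_X_pow_dvd_sub hdvd (by omega), coeff_mul,
    Finset.Nat.sum_antidiagonal_eq_sum_range_succ_mk]
  rfl
end

section
/- Let X, X₁, X₂, u_i, v_i be as in the context. Then the coefficient of z^{m+1} in det(I + z·X) equals (−1)^m·Σ_{i=1}^n u_i v_i + Σ_{a=0}^{m+1} trΛ^a(X₁)·trΛ^{m+1−a}(X₂). (Lemma 'block 1(ii)'.) -/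
/-!
Write `I + zX` in block form along `Fin (n + m) ≃ Fin n ⊕ Fin m`. The off-diagonal blocks
have rank one, `z u e₁ᵀ` and `z e_m vᵀ`, so the Schur complement of `A = I + zX₁`
(invertible over the fraction field, as `det A` has constant term `1`) differs from
`D = I + zX₂` in the entry `(m, 1)` only. Hence
`det (I + zX) = det A · det D - z² (vᵀ adj(A) u) · adj(D)₁ₘ`. As `D` is lower Hessenberg
with superdiagonal `z`, the cofactor `adj(D)₁ₘ` is `(-1)^(m-1) z^(m-1)`, so the correction
term is `(-1)^m z^(m+1) vᵀ adj(A) u`; its coefficient of `z^(m+1)` is `(-1)^m vᵀu` because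
`adj(A)` is `I` at `z = 0`.
-/

open Polynomial

namespace Matrix

section

variable {R S : Type*} [CommRing R] [CommRing S] {ι κ : Type*}

theorem map_vecMulVec (f : R →+* S) (x : ι → R) (y : κ → R) :
    (vecMulVec x y).map f = vecMulVec (f ∘ x) (f ∘ y) := by
  ext; simp [vecMulVec_apply]

theorem comp_mulVec [Fintype κ] (f : R →+* S) (M : Matrix ι κ R) (x : κ → R) :
    f ∘ (M *ᵥ x) = M.map f *ᵥ (f ∘ x) :=
  funext (RingHom.map_mulVec f M x)

theorem comp_single_one [DecidableEq ι] (f : R →+* S) (c : ι) :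
    f ∘ Pi.single c 1 = Pi.single c 1 := by
  ext j; by_cases hj : j = c <;> simp [hj]

variable [Fintype ι] [Fintype κ] [DecidableEq ι] [DecidableEq κ]

theorem adjugate_map (f : R →+* S) (M : Matrix ι ι R) : (M.map f).adjugate = M.adjugate.map f :=
  (f.map_adjugate M).symm

theorem det_fromBlocks_vecMulVec_single_of_isUnit {A : Matrix ι ι R} (hA : IsUnit A.det)
    (D : Matrix κ κ R) (u v : ι → R) (a b : κ) :
    (fromBlocks A (vecMulVec u (Pi.single b 1)) (vecMulVec (Pi.single a 1) v) D).det =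
      A.det * D.det - (v ⬝ᵥ A.adjugate *ᵥ u) * D.adjugate b a := by
  have := invertibleOfIsUnitDet A hA
  set s := v ⬝ᵥ A⁻¹ *ᵥ u with hs_def
  have hschur : D - vecMulVec (Pi.single a 1) v * ⅟A * vecMulVec u (Pi.single b 1) =
      D.updateRow a (D a + (-s) • Pi.single b 1) := by
    ext i j
    rw [invOf_eq_nonsing_inv, vecMulVec_mul, vecMulVec_mul_vecMulVec]
    by_cases hi : i = a
    · subst hi; simp [vecMulVec_apply, s, sub_eq_add_neg, dotProduct_mulVec]
    · simp [vecMulVec_apply, hi]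
  have hs : A.det * s = v ⬝ᵥ A.adjugate *ᵥ u := by
    rw [hs_def, inv_def, smul_mulVec, dotProduct_smul, smul_eq_mul, ← mul_assoc,
      Ring.mul_inverse_cancel _ hA, one_mul]
  rw [det_fromBlocks₁₁, hschur, det_updateRow_add, updateRow_eq_self, det_updateRow_smul,
    ← adjugate_apply, ← hs]
  ring

theorem det_fromBlocks_vecMulVec_single [IsDomain R] {A : Matrix ι ι R} (hA : A.det ≠ 0)
    (D : Matrix κ κ R) (u v : ι → R) (a b : κ) :
    (fromBlocks A (vecMulVec u (Pi.single b 1)) (vecMulVec (Pi.single a 1) v) D).det =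
      A.det * D.det - (v ⬝ᵥ A.adjugate *ᵥ u) * D.adjugate b a := by
  let f := algebraMap R (FractionRing R)
  have hf : Function.Injective f := IsFractionRing.injective R (FractionRing R)
  have hA' : IsUnit (A.map f).det := by
    rw [← RingHom.mapMatrix_apply, ← RingHom.map_det]
    exact isUnit_iff_ne_zero.mpr ((map_ne_zero_iff f hf).mpr hA)
  apply hf
  simp only [RingHom.map_det, RingHom.mapMatrix_apply, fromBlocks_map, map_vecMulVec,
    comp_single_one, det_fromBlocks_vecMulVec_single_of_isUnit hA', map_sub, map_mul,
    RingHom.map_dotProduct, comp_mulVec, adjugate_map, map_apply]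

theorem adjugate_zero_last_of_lowerHessenberg {k : ℕ} (x : R)
    (D : Matrix (Fin (k + 1)) (Fin (k + 1)) R)
    (hzero : ∀ a b : Fin (k + 1), a.val + 2 ≤ b.val → D a b = 0)
    (hsuper : ∀ a b : Fin (k + 1), b.val = a.val + 1 → D a b = x) :
    D.adjugate 0 (Fin.last k) = (-1) ^ k * x ^ k := by
  have hminor : ((D.updateRow (Fin.last k) (Pi.single 0 1)).submatrix Fin.castSucc Fin.succ).det
      = x ^ k := by
    rw [det_of_isLowerTriangular]
    · simp [hsuper]
    · intro a b hab
      have : a.val < b.val := hab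
      simp only [submatrix_apply, updateRow_ne (Fin.castSucc_lt_last _).ne]
      exact hzero _ _ (by simp; omega)
  rw [adjugate_apply, det_succ_row _ (Fin.last k), Fin.sum_univ_succ, Finset.sum_eq_zero]
  · simp [hminor]
  · intro j _
    simp [Fin.succ_ne_zero]

end

section

variable {R : Type*} [CommRing R] {ι κ : Type*} [DecidableEq ι] [DecidableEq κ]

noncomputable def lambdaMatrix (M : Matrix ι ι R) : Matrix ι ι R[X] :=
  1 + (X : R[X]) • M.map C

theorem lambdaMatrix_submatrix (M : Matrix ι ι R) (e : κ ≃ ι) :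
    (lambdaMatrix M).submatrix e e = lambdaMatrix (M.submatrix e e) := by
  simp [lambdaMatrix, submatrix_add, submatrix_smul, submatrix_map]

theorem lambdaMatrix_fromBlocks (A : Matrix ι ι R) (B : Matrix ι κ R) (C' : Matrix κ ι R)
    (D : Matrix κ κ R) :
    lambdaMatrix (fromBlocks A B C' D) =
      fromBlocks (lambdaMatrix A) ((X : R[X]) • B.map C) ((X : R[X]) • C'.map C)
        (lambdaMatrix D) := by
  simp [lambdaMatrix, fromBlocks_map, fromBlocks_smul, ← fromBlocks_one, fromBlocks_add]

theorem map_constantCoeff_lambdaMatrix (M : Matrix ι ι R) :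
    (lambdaMatrix M).map constantCoeff = 1 := by
  ext i j
  by_cases h : i = j <;> simp [lambdaMatrix, one_apply, h]

variable [Fintype ι] [Fintype κ]

theorem constantCoeff_det_lambdaMatrix (M : Matrix ι ι R) :
    constantCoeff (lambdaMatrix M).det = 1 := by
  rw [RingHom.map_det, RingHom.mapMatrix_apply, map_constantCoeff_lambdaMatrix, det_one]

theorem constantCoeff_dotProduct_adjugate_lambdaMatrix_mulVec (M : Matrix ι ι R)
    (u v : ι → R) :
    constantCoeff ((C ∘ v) ⬝ᵥ (lambdaMatrix M).adjugate *ᵥ (C ∘ u)) = v ⬝ᵥ u := by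
  have hcomp : (constantCoeff : R[X] →+* R) ∘ C = id := funext fun _ => coeff_C_zero
  rw [RingHom.map_dotProduct, comp_mulVec, ← adjugate_map, map_constantCoeff_lambdaMatrix,
    adjugate_one, one_mulVec]
  simp only [← Function.comp_assoc, hcomp, Function.id_comp]

theorem det_lambdaMatrix_fromBlocks_vecMulVec [IsDomain R] {k : ℕ} (A : Matrix ι ι R)
    (D : Matrix (Fin (k + 1)) (Fin (k + 1)) R)
    (hzero : ∀ a b : Fin (k + 1), a.val + 2 ≤ b.val → D a b = 0)
    (hone : ∀ a b : Fin (k + 1), b.val = a.val + 1 → D a b = 1) (u v : ι → R) :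
    (lambdaMatrix (fromBlocks A (vecMulVec u (Pi.single 0 1))
        (vecMulVec (Pi.single (Fin.last k) 1) v) D)).det =
      (lambdaMatrix A).det * (lambdaMatrix D).det +
        (-1) ^ (k + 1) * X ^ (k + 2) *
          ((C ∘ v) ⬝ᵥ (lambdaMatrix A).adjugate *ᵥ (C ∘ u)) := by
  have hA : (lambdaMatrix A).det ≠ 0 := fun h => by
    simpa [h] using constantCoeff_det_lambdaMatrix A
  have hcof : (lambdaMatrix D).adjugate 0 (Fin.last k) = (-1) ^ k * X ^ k := by
    apply adjugate_zero_last_of_lowerHessenberg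
    · intro a b hab
      have : a ≠ b := fun h => by subst h; omega
      simp [lambdaMatrix, hzero a b hab, this]
    · intro a b hab
      have : a ≠ b := fun h => by subst h; omega
      simp [lambdaMatrix, hone a b hab, this]
  rw [lambdaMatrix_fromBlocks, map_vecMulVec, map_vecMulVec, comp_single_one, comp_single_one,
    ← smul_vecMulVec, ← vecMulVec_smul, det_fromBlocks_vecMulVec_single hA, hcof,
    smul_dotProduct, mulVec_smul, dotProduct_smul]
  simp only [smul_eq_mul]
  ring

end

theorem submatrix_finSumFinEquiv_eq_fromBlocks {α : Type*} [MulZeroOneClass α] {n k : ℕ}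
    {M : Matrix (Fin (n + (k + 1))) (Fin (n + (k + 1))) α} {X₁ : Matrix (Fin n) (Fin n) α}
    {X₂ : Matrix (Fin (k + 1)) (Fin (k + 1)) α} {u v : Fin n → α}
    (hX₁ : ∀ i j, X₁ i j = M (Fin.castAdd _ i) (Fin.castAdd _ j))
    (hX₂ : ∀ a b, X₂ a b = M (Fin.natAdd n a) (Fin.natAdd n b))
    (hu : ∀ i, u i = M (Fin.castAdd _ i) (Fin.natAdd n 0))
    (hv : ∀ i, v i = M (Fin.natAdd n (Fin.last k)) (Fin.castAdd _ i))
    (hupper : ∀ i b, b ≠ 0 → M (Fin.castAdd _ i) (Fin.natAdd n b) = 0)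
    (hlower : ∀ a j, a ≠ Fin.last k → M (Fin.natAdd n a) (Fin.castAdd _ j) = 0) :
    M.submatrix finSumFinEquiv finSumFinEquiv =
      fromBlocks X₁ (vecMulVec u (Pi.single 0 1))
        (vecMulVec (Pi.single (Fin.last k) 1) v) X₂ := by
  ext (i | a) (j | b)
  · simp [hX₁]
  · by_cases hb : b = 0
    · subst hb; simp [vecMulVec_apply, hu]
    · simp [vecMulVec_apply, hb, hupper i b hb]
  · by_cases ha : a = Fin.last k
    · subst ha; simp [vecMulVec_apply, hv]
    · simp [vecMulVec_apply, ha, hlower a j ha]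
  · simp [hX₂]

end Matrix

open Matrix

theorem block1_ii (n m : ℕ) (hm : 2 ≤ m)
    (Xm : Matrix (Fin (n + m)) (Fin (n + m)) ℂ)
    (h1 : ∀ i j : Fin (n + m), i.val < n → n + 1 ≤ j.val → Xm i j = 0)
    (h2 : ∀ i j : Fin (n + m), n ≤ i.val → i.val < n + m - 1 → j.val < n → Xm i j = 0)
    (h3 : ∀ i j : Fin (n + m), n ≤ i.val → n ≤ j.val → i.val + 2 ≤ j.val → Xm i j = 0)
    (h4 : ∀ i j : Fin (n + m), n ≤ i.val → j.val = i.val + 1 → Xm i j = 1)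
    (X₁ : Matrix (Fin n) (Fin n) ℂ)
    (hX₁ : ∀ i j : Fin n, X₁ i j = Xm (Fin.castLE (by omega) i) (Fin.castLE (by omega) j))
    (X₂ : Matrix (Fin m) (Fin m) ℂ)
    (hX₂ : ∀ a b : Fin m, X₂ a b = Xm (Fin.natAdd n a) (Fin.natAdd n b))
    (u v : Fin n → ℂ)
    (hu : ∀ i : Fin n, u i = Xm (Fin.castLE (by omega) i) ⟨n, by omega⟩)
    (hv : ∀ i : Fin n, v i = Xm ⟨n + m - 1, by omega⟩ (Fin.castLE (by omega) i)) :
    trLambda Xm (m + 1) =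
      (-1 : ℂ) ^ m * ∑ i : Fin n, u i * v i +
        ∑ a ∈ Finset.range (m + 2), trLambda X₁ a * trLambda X₂ (m + 1 - a) := by
  obtain ⟨k, rfl⟩ : ∃ k, m = k + 1 := ⟨m - 1, by omega⟩
  have hblocks := submatrix_finSumFinEquiv_eq_fromBlocks hX₁ hX₂ hu hv
    (fun i b hb => h1 (Fin.castAdd _ i) (Fin.natAdd n b) i.isLt
      (by have := Fin.pos_iff_ne_zero.mpr hb; simp; omega))
    (fun a j ha => h2 (Fin.natAdd n a) (Fin.castAdd _ j) (by simp)
      (by have := Fin.lt_last_iff_ne_last.mpr ha; simp [Fin.lt_def] at this ⊢; omega) j.isLt)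
  have hdet := det_lambdaMatrix_fromBlocks_vecMulVec X₁ X₂
    (fun a b hab => by rw [hX₂]; exact h3 _ _ (by simp) (by simp) (by simp; omega))
    (fun a b hab => by rw [hX₂]; exact h4 _ _ (by simp) (by simp; omega)) u v
  rw [← hblocks, ← lambdaMatrix_submatrix, det_submatrix_equiv_self] at hdet
  have hcorrection (q : ℂ[X]) :
      ((-1 : ℂ[X]) ^ (k + 1) * X ^ (k + 2) * q).coeff (k + 2) = (-1) ^ (k + 1) * q.coeff 0 := by
    rw [← C_1, ← C_neg, ← C_pow, mul_assoc, coeff_C_mul, coeff_X_pow_mul', if_pos le_rfl,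
      Nat.sub_self]
  calc trLambda Xm (k + 2) = (lambdaMatrix Xm).det.coeff (k + 2) := rfl
    _ = _ := by
      rw [hdet, coeff_add, hcorrection, ← constantCoeff_apply,
        constantCoeff_dotProduct_adjugate_lambdaMatrix_mulVec, dotProduct_comm, coeff_mul,
        Finset.Nat.sum_antidiagonal_eq_sum_range_succ_mk, add_comm]
      rfl
end

section
/- Let n ≥ 1, m ≥ 2, and let λ_1,…,λ_n, μ_1,…,μ_m be complex numbers satisfying λ_1+⋯+λ_n+μ_1+⋯+μ_m = 0. Then e_{m+1}(λ_1,…,λ_n,μ_1,…,μ_m) = (−1)^m·h_{m+1}(λ_1,…,λ_n) + Σ_{j=2}^{m} (−1)^{m−j}·h_{m+1−j}(λ_1,…,λ_n)·e_j(λ_1,…,λ_n,μ_1,…,μ_m). (Equation (added) of the paper, read through the Harish-Chandra coordinates.) -/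
/-- The `j`-th elementary symmetric polynomial of a finite family of complex numbers
(`esymm x 0 = 1`). -/
noncomputable def esymm {ι : Type*} [Fintype ι] [DecidableEq ι] (x : ι → ℂ) (j : ℕ) : ℂ :=
  ∑ s ∈ Finset.powersetCard j (Finset.univ : Finset ι), ∏ i ∈ s, x i

/-- The `k`-th complete homogeneous symmetric polynomial
`h_k(x_1,…,x_N) = Σ_{i_1 ≤ ⋯ ≤ i_k} x_{i_1}⋯x_{i_k}` (`hsymm x 0 = 1`). -/
noncomputable def hsymm {N : ℕ} (x : Fin N → ℂ) (k : ℕ) : ℂ :=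
  ∑ f ∈ Finset.univ.filter (fun f : Fin k → Fin N => ∀ a b : Fin k, a ≤ b → f a ≤ f b),
    ∏ a : Fin k, x (f a)

/-! The series `∑ₖ (-1)ᵏ hₖ(λ) tᵏ = ∏ᵢ (1 + λᵢ t)⁻¹` cancels the `λ`-factor of the generating
series `∏ᵢ (1 + λᵢ t) ∏ⱼ (1 + μⱼ t)` of the `eⱼ(λ, μ)`, leaving `∏ⱼ (1 + μⱼ t)`, a polynomial of
degree `m`. Comparing coefficients of `t^(m+1)` gives a linear relation between the `hₖ(λ)` and
the `eⱼ(λ, μ)`, which becomes the claimed identity once `e₀ = h₀ = 1` and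
`e₁(λ, μ) = ∑ λᵢ + ∑ μⱼ = 0` are inserted. -/

open Finset PowerSeries

theorem Multiset.sort_ofFn_of_monotone {α : Type*} [LinearOrder α] {k : ℕ} {f : Fin k → α}
    (hf : Monotone f) : Multiset.sort (List.ofFn f : Multiset α) = List.ofFn f :=
  List.mergeSort_eq_self _ (List.sortedLE_ofFn_iff.mpr hf).pairwise

theorem coeff_prod_one_add_C_mul_X {ι R : Type*} [CommRing R] [DecidableEq ι] (y : ι → R)
    (s : Finset ι) (k : ℕ) :
    coeff k (∏ i ∈ s, (1 + C (y i) * X)) = ∑ t ∈ s.powersetCard k, ∏ i ∈ t, y i := by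
  simp_rw [add_comm (1 : R⟦X⟧), prod_add, prod_const_one, mul_one, prod_mul_distrib, prod_const,
    ← map_prod, map_sum, coeff_C_mul_X_pow, powersetCard_eq_filter, sum_filter]
  exact sum_congr rfl fun t _ => by simp [eq_comm]

theorem coeff_prod_mk_pow {ι R : Type*} [CommRing R] [Fintype ι] [DecidableEq ι] (x : ι → R)
    (k : ℕ) :
    coeff k (∏ i, PowerSeries.mk fun j => x i ^ j) =
      ∑ s : Sym ι k, ((s : Multiset ι).map x).prod := by
  rw [coeff_prod]
  simp only [coeff_mk]
  symm
  refine sum_bij' (fun s _ => Multiset.toFinsupp (s : Multiset ι))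
    (fun l hl => ⟨Finsupp.toMultiset l, ?_⟩) ?_ (fun _ _ => mem_univ _) ?_ ?_ ?_
  · rw [mem_finsuppAntidiag] at hl
    rw [Finsupp.card_toMultiset, ← hl.1, Finsupp.sum_fintype _ _ fun _ => rfl]
    rfl
  · intro s _
    simp only [mem_finsuppAntidiag, subset_univ, and_true]
    change ∑ i, Multiset.count i (s : Multiset ι) = k
    simp
  · exact fun s _ => Sym.ext (by simp)
  · simp
  · intro s _
    rw [prod_multiset_map_count]
    exact prod_subset (subset_univ _) fun i _ hi => by simp_all

theorem one_add_C_mul_X_mul_mk_pow_neg {R : Type*} [CommRing R] (a : R) :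
    (1 + C a * X) * PowerSeries.mk (fun k => (-a) ^ k) = 1 := by
  have := congrArg (rescale (-a)) (mk_one_mul_one_sub_eq_one (S := R))
  rw [map_mul, map_sub, map_one, rescale_X, rescale_mk] at this
  simpa [mul_comm] using this

section ElementarySymmetric

variable {ι : Type*} [Fintype ι] [DecidableEq ι]

theorem esymm_eq_coeff (y : ι → ℂ) (k : ℕ) :
    esymm y k = coeff k (∏ i, (1 + C (y i) * X)) :=
  (coeff_prod_one_add_C_mul_X y univ k).symm

theorem esymm_zero (y : ι → ℂ) : esymm y 0 = 1 := by
  simp [esymm]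

theorem esymm_one (y : ι → ℂ) : esymm y 1 = ∑ i, y i := by
  simp [esymm, powersetCard_one]

theorem esymm_eq_zero_of_card_lt (y : ι → ℂ) {k : ℕ} (hk : Fintype.card ι < k) :
    esymm y k = 0 := by
  rw [esymm, powersetCard_eq_empty.mpr (by simpa using hk), sum_empty]

end ElementarySymmetric

section CompleteHomogeneous

variable {N : ℕ}

theorem hsymm_eq_sum_sym (x : Fin N → ℂ) (k : ℕ) :
    hsymm x k = ∑ s : Sym (Fin N) k, ((s : Multiset (Fin N)).map x).prod := by
  refine sum_bij' (fun f _ => ⟨List.ofFn f, by simp⟩)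
    (fun s _ a => (Multiset.sort (s : Multiset (Fin N)))[a.1]'(by simp))
    (fun _ _ => mem_univ _) ?_ ?_ ?_ ?_
  · intro s _
    simp only [mem_filter, mem_univ, true_and]
    exact fun a b hab => (Multiset.pairwise_sort _ _).sortedLE.monotone_get hab
  · intro f hf
    simp only [mem_filter, mem_univ, true_and] at hf
    funext a
    simp [Multiset.sort_ofFn_of_monotone fun a b hab => hf a b hab]
  · intro s _
    apply Sym.ext
    conv_rhs => rw [← Multiset.sort_eq (s : Multiset (Fin N)) (· ≤ ·)]
    exact congrArg _ (List.ext_getElem (by simp) (by simp))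
  · simp [List.prod_ofFn]

theorem hsymm_zero (x : Fin N → ℂ) : hsymm x 0 = 1 := by
  simp [hsymm_eq_sum_sym, Sym.eq_nil_of_card_zero]

theorem hsymm_neg (x : Fin N → ℂ) (k : ℕ) : hsymm (-x) k = (-1) ^ k * hsymm x k := by
  simp only [hsymm_eq_sum_sym, mul_sum]
  exact sum_congr rfl fun s _ => by simpa using Multiset.prod_map_neg ((s : Multiset _).map x)

theorem hsymm_eq_coeff (x : Fin N → ℂ) (k : ℕ) :
    hsymm x k = coeff k (∏ i, PowerSeries.mk fun j => x i ^ j) := by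
  rw [hsymm_eq_sum_sym, coeff_prod_mk_pow]

end CompleteHomogeneous

theorem sum_antidiagonal_neg_one_pow_mul_hsymm_mul_esymm_sumElim {n : ℕ} {ι : Type*} [Fintype ι]
    [DecidableEq ι] (lam : Fin n → ℂ) (mu : ι → ℂ) (r : ℕ) :
    ∑ p ∈ antidiagonal r, (-1) ^ p.1 * hsymm lam p.1 * esymm (Sum.elim lam mu) p.2 =
      esymm mu r := by
  have hinv : (∏ i, PowerSeries.mk fun j => (-lam i) ^ j) * ∏ i, (1 + C (lam i) * X) = 1 := by
    rw [← prod_mul_distrib]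
    exact prod_eq_one fun i _ => by rw [mul_comm]; exact one_add_C_mul_X_mul_mk_pow_neg _
  calc _ = coeff r ((∏ i, PowerSeries.mk fun j => (-lam i) ^ j) *
        ((∏ i, (1 + C (lam i) * X)) * ∏ i, (1 + C (mu i) * X))) := by
        rw [coeff_mul]
        refine sum_congr rfl fun p _ => ?_
        rw [← hsymm_neg, hsymm_eq_coeff, esymm_eq_coeff, Fintype.prod_sum_type]
        rfl
    _ = esymm mu r := by rw [← mul_assoc, hinv, one_mul, esymm_eq_coeff]

theorem esymm_sumElim_succ {n : ℕ} {ι : Type*} [Fintype ι] [DecidableEq ι] (lam : Fin n → ℂ)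
    (mu : ι → ℂ) (m : ℕ) :
    esymm (Sum.elim lam mu) (m + 1) = esymm mu (m + 1) +
      ∑ j ∈ range (m + 1),
        (-1) ^ (m - j) * hsymm lam (m + 1 - j) * esymm (Sum.elim lam mu) j := by
  have key := sum_antidiagonal_neg_one_pow_mul_hsymm_mul_esymm_sumElim lam mu (m + 1)
  rw [← Nat.sum_antidiagonal_swap, Nat.sum_antidiagonal_eq_sum_range_succ_mk, sum_range_succ]
    at key
  have hsign : ∀ j ∈ range (m + 1),
      (-1 : ℂ) ^ (m + 1 - j) * hsymm lam (m + 1 - j) * esymm (Sum.elim lam mu) j =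
        -((-1) ^ (m - j) * hsymm lam (m + 1 - j) * esymm (Sum.elim lam mu) j) := by
    intro j hj
    rw [Nat.sub_add_comm (mem_range_succ_iff.mp hj), pow_succ]
    ring
  simp only [Prod.swap, Nat.sub_self, pow_zero, hsymm_zero, one_mul] at key
  rw [sum_congr rfl hsign, sum_neg_distrib] at key
  linear_combination key

theorem eq_added_general (n m : ℕ) (hm : 2 ≤ m)
    (lam : Fin n → ℂ) (mu : Fin m → ℂ)
    (hsum : ∑ i, lam i + ∑ j, mu j = 0) :
    esymm (Sum.elim lam mu) (m + 1) =
      (-1 : ℂ) ^ m * hsymm lam (m + 1) +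
        ∑ j ∈ Finset.Icc 2 m,
          (-1 : ℂ) ^ (m - j) * hsymm lam (m + 1 - j) * esymm (Sum.elim lam mu) j := by
  have he1 : esymm (Sum.elim lam mu) 1 = 0 := by
    rw [esymm_one, Fintype.sum_sum_type, ← hsum]
    rfl
  rw [esymm_sumElim_succ, esymm_eq_zero_of_card_lt mu (by simp), zero_add, range_eq_Ico,
    sum_eq_sum_Ico_succ_bot (by omega), sum_eq_sum_Ico_succ_bot (by omega),
    Ico_add_one_right_eq_Icc, he1, esymm_zero, Nat.sub_zero, Nat.sub_zero]
  ring

theorem eq_added (n m : ℕ) (hn : 1 ≤ n) (hm : 2 ≤ m)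
    (lam : Fin n → ℂ) (mu : Fin m → ℂ)
    (hsum : ∑ i, lam i + ∑ j, mu j = 0) :
    esymm (Sum.elim lam mu) (m + 1) =
      (-1 : ℂ) ^ m * hsymm lam (m + 1) +
        ∑ j ∈ Finset.Icc 2 m,
          (-1 : ℂ) ^ (m - j) * hsymm lam (m + 1 - j) * esymm (Sum.elim lam mu) j :=
  eq_added_general n m hm lam mu hsum
end

section
/- Let n ≥ 1, A an n×n complex matrix, x, y ∈ ℂⁿ and s ∈ ℂ. Then, in ℂ[[τ]], G_{x,y}(A + s·I) = ((1 − sτ)^{n+1})^{−1} · (G_{x,y}(A) substituted at τ ↦ τ·(1 − sτ)^{−1}), where the substitution is composition of formal power series with the series τ·(1 − sτ)^{−1} (which has zero constant term), and (1 − sτ)^{−1} is the multiplicative inverse of 1 − sτ in ℂ[[τ]]. (The generating-function identity Σ_i α_i(y,x)(A+sI_n)τ^i = (1−sτ)^{−n−1} Σ_i α_i(y,x)(A)(τ(1−sτ)^{−1})^i from Appendix A.) -/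
/-! With `u = 1 - sτ` and `g = τ u⁻¹` one has `I - τ(A + sI) = u (I - gA)`, so passing from
`A` to `A + sI` multiplies the inverse matrix by `u⁻¹` and the determinant by `uⁿ`, a total factor
`u^{-(n+1)}`. Substituting `τ ↦ g` is a `ℂ`-algebra endomorphism of `ℂ⟦X⟧` sending `I - τA` to
`I - gA`, and any such endomorphism commutes with matrix inverses and with determinants, so it turns
`G_{x,y}(A)` into the same expression built from `I - gA`. -/

/-- The generating series `G_{x,y}(B) = (Σ_{i,j} x_i ((I − τB)^{-1})_{i,j} y_j) · det(I − τB)^{-1}`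
in `ℂ[[τ]]`.  Here `(I − τB)⁻¹` is the matrix inverse over `ℂ[[τ]]` (which is the genuine
two-sided inverse, since `det(I − τB)` has constant term `1`, hence is a unit), and the last
factor uses the power series inverse. -/
noncomputable def genG {n : ℕ} (x y : Fin n → ℂ) (B : Matrix (Fin n) (Fin n) ℂ) :
    PowerSeries ℂ :=
  (∑ i, ∑ j, PowerSeries.C (R := ℂ) (x i) *
      (((1 - (PowerSeries.X : PowerSeries ℂ) • B.map (PowerSeries.C (R := ℂ)) : Matrix (Fin n) (Fin n) (PowerSeries ℂ))⁻¹) i j) * PowerSeries.C (R := ℂ) (y j)) *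
    ((1 - (PowerSeries.X : PowerSeries ℂ) • B.map (PowerSeries.C (R := ℂ))).det)⁻¹

/-- Composition `F(g)` of formal power series, written via coefficients.  When `g` has zero
constant term, `coeff k (g^i) = 0` for `i > k`, so this finite sum is exactly the coefficient
of `τ^k` in the substitution of `g` into `F`. -/
noncomputable def psComp (F g : PowerSeries ℂ) : PowerSeries ℂ :=
  PowerSeries.mk fun k =>
    ∑ i ∈ Finset.range (k + 1), PowerSeries.coeff (R := ℂ) i F * PowerSeries.coeff (R := ℂ) k (g ^ i)

open PowerSeries

theorem Matrix.map_inv_of_isUnit_det {ι R S F : Type*} [Fintype ι] [DecidableEq ι] [CommRing R]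
    [CommRing S] [FunLike F R S] [RingHomClass F R S] (f : F) {M : Matrix ι ι R}
    (hM : IsUnit M.det) : M⁻¹.map f = (M.map f)⁻¹ := by
  refine (Matrix.inv_eq_right_inv ?_).symm
  rw [← Matrix.map_mul, Matrix.mul_nonsing_inv M hM, Matrix.map_one f (map_zero f) (map_one f)]

namespace PowerSeries

theorem map_inv_of_constantCoeff_ne_zero {k L F : Type*} [Field k] [Field L]
    [FunLike F k⟦X⟧ L⟦X⟧] [RingHomClass F k⟦X⟧ L⟦X⟧] (φ : F) {f : k⟦X⟧}
    (hf : constantCoeff f ≠ 0) : φ f⁻¹ = (φ f)⁻¹ := by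
  have hφf : constantCoeff (φ f) ≠ 0 :=
    (isUnit_iff_constantCoeff.mp ((isUnit_iff_constantCoeff.mpr hf.isUnit).map φ)).ne_zero
  rw [eq_inv_iff_mul_eq_one hφf, ← map_mul, PowerSeries.inv_mul_cancel f hf, map_one]

section Matrix

variable {ι R : Type*} [DecidableEq ι] [CommRing R]

theorem constantCoeff_det_one_sub_smul_map_C [Fintype ι] {c : R⟦X⟧} (hc : constantCoeff c = 0)
    (B : Matrix ι ι R) : constantCoeff (1 - c • B.map C).det = 1 := by
  rw [RingHom.map_det, ← Matrix.det_one (n := ι) (R := R)]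
  congr 1
  ext i j
  simp [hc, Matrix.one_apply, apply_ite constantCoeff]

theorem one_sub_X_smul_map_C_add_smul_one (A : Matrix ι ι R) (s : R) {g : R⟦X⟧}
    (hg : (1 - C s * X) * g = X) :
    1 - (X : R⟦X⟧) • (A + s • 1).map C = (1 - C s * X) • (1 - g • A.map C) := by
  refine Matrix.ext fun i j => ?_
  simp only [Matrix.sub_apply, Matrix.add_apply, Matrix.smul_apply, Matrix.map_apply,
    Matrix.one_apply, smul_eq_mul, map_add, mul_ite, mul_one, mul_zero, apply_ite C, map_zero]
  split_ifs <;> linear_combination C (A i j) * hg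

theorem map_one_sub_X_smul_map_C (φ : R⟦X⟧ →ₐ[R] R⟦X⟧) (A : Matrix ι ι R) :
    (1 - (X : R⟦X⟧) • A.map C).map φ = 1 - φ X • A.map C := by
  have hC (a : R) : φ (C a) = C a := φ.commutes a
  refine Matrix.ext fun i j => ?_
  simp [Matrix.one_apply, apply_ite, hC]

end Matrix

end PowerSeries

section ResolventForm

variable {ι k : Type*} [Fintype ι] [DecidableEq ι] [Field k]

noncomputable def resolventForm (x y : ι → k) (M : Matrix ι ι k⟦X⟧) : k⟦X⟧ :=
  (∑ i, ∑ j, C (x i) * M⁻¹ i j * C (y j)) * M.det⁻¹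

theorem resolventForm_smul (x y : ι → k) {u : k⟦X⟧} (hu : constantCoeff u ≠ 0)
    {M : Matrix ι ι k⟦X⟧} (hM : IsUnit M.det) :
    resolventForm x y (u • M) = (u ^ (Fintype.card ι + 1))⁻¹ * resolventForm x y M := by
  have hinv : (u • M)⁻¹ = u⁻¹ • M⁻¹ := by
    refine Matrix.inv_eq_right_inv ?_
    rw [Matrix.smul_mul, Matrix.mul_smul, smul_smul, PowerSeries.mul_inv_cancel u hu,
      Matrix.mul_nonsing_inv M hM, one_smul]
  simp only [resolventForm, hinv, Matrix.det_smul, Matrix.smul_apply, smul_eq_mul,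
    PowerSeries.mul_inv_rev, pow_succ, mul_assoc, mul_left_comm (C _) u⁻¹, ← Finset.mul_sum]
  ring

theorem map_resolventForm (φ : k⟦X⟧ →ₐ[k] k⟦X⟧) (x y : ι → k) {M : Matrix ι ι k⟦X⟧}
    (hM : constantCoeff M.det ≠ 0) :
    φ (resolventForm x y M) = resolventForm x y (M.map φ) := by
  have hC (a : k) : φ (C a) = C a := φ.commutes a
  have hdet : φ M.det = (M.map φ).det := φ.map_det M
  have hinv (i j : ι) : φ (M⁻¹ i j) = (M.map φ)⁻¹ i j := by
    rw [← Matrix.map_inv_of_isUnit_det φ (isUnit_iff_constantCoeff.mpr hM.isUnit),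
      Matrix.map_apply]
  simp only [resolventForm, map_mul, map_sum, hC, hinv, hdet,
    map_inv_of_constantCoeff_ne_zero φ hM]

end ResolventForm

theorem psComp_eq_subst (F : ℂ⟦X⟧) {g : ℂ⟦X⟧} (hg : constantCoeff g = 0) :
    psComp F g = F.subst g := by
  ext m
  rw [psComp, coeff_mk, coeff_subst' (HasSubst.of_constantCoeff_zero' hg),
    finsum_eq_sum_of_support_subset (s := Finset.range (m + 1))]
  · simp only [smul_eq_mul]
  · intro d hd
    simp only [Function.mem_support] at hd
    by_contra hdm
    have hX : X ^ d ∣ g ^ d := pow_dvd_pow_of_dvd (X_dvd_iff.mpr hg) d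
    exact hd (by rw [X_pow_dvd_iff.mp hX m (by simpa using hdm), smul_zero])

theorem genG_eq_resolventForm {n : ℕ} (x y : Fin n → ℂ) (B : Matrix (Fin n) (Fin n) ℂ) :
    genG x y B = resolventForm x y (1 - (X : ℂ⟦X⟧) • B.map C) :=
  rfl

theorem genG_shift_general (n : ℕ) (A : Matrix (Fin n) (Fin n) ℂ)
    (x y : Fin n → ℂ) (s : ℂ) :
    genG x y (A + s • 1) =
      ((1 - PowerSeries.C (R := ℂ) s * PowerSeries.X) ^ (n + 1))⁻¹ *
        psComp (genG x y A) (PowerSeries.X * (1 - PowerSeries.C (R := ℂ) s * PowerSeries.X)⁻¹) := by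
  set u : ℂ⟦X⟧ := 1 - C s * X
  have hu : constantCoeff u ≠ 0 := by simp [u]
  set g : ℂ⟦X⟧ := X * u⁻¹
  have hg : constantCoeff g = 0 := by simp [g]
  have hug : u * g = X := by rw [mul_left_comm, PowerSeries.mul_inv_cancel u hu, mul_one]
  have hsubst : HasSubst g := HasSubst.of_constantCoeff_zero' hg
  have hN : IsUnit (1 - g • A.map C).det := by
    simp [isUnit_iff_constantCoeff, constantCoeff_det_one_sub_smul_map_C hg]
  calc genG x y (A + s • 1)
    _ = resolventForm x y (u • (1 - g • A.map C)) := by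
      rw [genG_eq_resolventForm, one_sub_X_smul_map_C_add_smul_one A s hug]
    _ = (u ^ (n + 1))⁻¹ * resolventForm x y (1 - g • A.map C) := by
      rw [resolventForm_smul x y hu hN, Fintype.card_fin]
    _ = (u ^ (n + 1))⁻¹ * (genG x y A).subst g := by
      rw [genG_eq_resolventForm, ← coe_substAlgHom hsubst,
        map_resolventForm _ _ _ (by simp [constantCoeff_det_one_sub_smul_map_C]),
        map_one_sub_X_smul_map_C, substAlgHom_X]
    _ = _ := by rw [psComp_eq_subst _ hg]

theorem genG_shift (n : ℕ) (hn : 1 ≤ n) (A : Matrix (Fin n) (Fin n) ℂ)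
    (x y : Fin n → ℂ) (s : ℂ) :
    genG x y (A + s • 1) =
      ((1 - PowerSeries.C (R := ℂ) s * PowerSeries.X) ^ (n + 1))⁻¹ *
        psComp (genG x y A) (PowerSeries.X * (1 - PowerSeries.C (R := ℂ) s * PowerSeries.X)⁻¹) :=
  genG_shift_general n A x y s
end

section
/- Fix integers n ≥ 1, m ≥ 2 and complex numbers ζ_0,…,ζ_{m−2}; set ζ(z) := z^m + Σ_{i=0}^{m−2} ζ_i z^i ∈ ℂ[z]. Suppose f, w ∈ ℂ[z] satisfy: f(z) − f(z−1) equals the n-th derivative of the polynomial z^n·ζ(z); w has degree at most m; and Δ^{n−1}(z^n·w(z)) = f(z), where Δ is the linear operator on ℂ[z] defined by (Δp)(z) := p(z+1/2) − p(z−1/2). Then the coefficient of z^m in w equals 1 and the coefficient of z^{m−1} in w equals (n+m)/2. (The facts w_m = 1 and w_{m−1} = (n+m)/2 used in Section 4.6.) -/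
/-!
Write `Δ = T_{1/2} - T_{-1/2}` with `T_s p = p(X + s)` (Taylor shift). Shifts commute with `Δ`,
and `T_{-1/2} Δ f = f - f(X - 1)`, so `q := T_{-1/2}(Xⁿ w)` satisfies `Δⁿ q = Dⁿ(Xⁿ ζ)`.
By Taylor's formula `Δ = D + (odd derivatives of order ≥ 3)`, so `Δⁿ q` and `Dⁿ q` agree in their
two top coefficients; since `Dⁿ` is injective on coefficients of degree `≥ n`, the top two
coefficients of `q` are those of `Xⁿ ζ`, namely `1` and `0`. Shifting back by `1/2` gives
`w_m = 1` and `w_{m-1} - (n + m)/2 = 0`.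
-/

open Polynomial

namespace Polynomial

section CommRing

variable {R : Type*} [CommRing R]

noncomputable def centralDiff (s : R) (p : R[X]) : R[X] :=
  taylor s p - taylor (-s) p

theorem centralDiff_commute_taylor (s r : R) : Function.Commute (centralDiff s) (taylor r) := by
  intro p
  simp only [centralDiff, map_sub, taylor_taylor, add_comm]

theorem taylor_neg_centralDiff (s : R) (p : R[X]) :
    taylor (-s) (centralDiff s p) = p - taylor (-(2 * s)) p := by
  rw [centralDiff, map_sub, taylor_taylor, taylor_taylor, neg_add_cancel, taylor_zero, two_mul,
    neg_add]

theorem eval_sub_eval_neg_of_natDegree_le_two {q : R[X]} (hq : q.natDegree ≤ 2) (c : R) :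
    q.eval c - q.eval (-c) = 2 * c * q.coeff 1 := by
  rw [eval_eq_sum_range' (n := 3) (by omega), eval_eq_sum_range' (n := 3) (by omega)]
  simp only [Finset.sum_range_succ, Finset.sum_range_zero]
  ring

theorem coeff_hasseDeriv_one (k : ℕ) (p : R[X]) :
    (hasseDeriv k p).coeff 1 = (derivative p).coeff k := by
  rw [hasseDeriv_coeff, coeff_derivative, add_comm 1 k, Nat.choose_succ_self_right]
  push_cast
  ring

-- `p(X ± s) = ∑ₖ (±s)ᵏ Hₖ p`: the even orders cancel and `H₁ = D`, so only orders `≥ 3` remain.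
theorem natDegree_centralDiff_sub_le (s : R) (p : R[X]) :
    (centralDiff s p - C (2 * s) * derivative p).natDegree ≤ p.natDegree - 3 := by
  refine natDegree_le_iff_coeff_eq_zero.mpr fun k hk => ?_
  have hdeg : (hasseDeriv k p).natDegree ≤ 2 :=
    (natDegree_hasseDeriv_le p k).trans (by omega)
  rw [coeff_sub, centralDiff, coeff_sub, taylor_coeff, taylor_coeff,
    eval_sub_eval_neg_of_natDegree_le_two hdeg, coeff_C_mul, coeff_hasseDeriv_one, sub_self]

theorem coeff_taylor_of_natDegree_le {p : R[X]} {N : ℕ} (hp : p.natDegree ≤ N) (r : R) :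
    (taylor r p).coeff N = p.coeff N := by
  have hdeg : (hasseDeriv N p).natDegree ≤ 0 := (natDegree_hasseDeriv_le p N).trans (by omega)
  rw [taylor_coeff, eq_C_of_natDegree_le_zero hdeg, eval_C, hasseDeriv_coeff, zero_add,
    Nat.choose_self, Nat.cast_one, one_mul]

theorem coeff_taylor_of_natDegree_le_succ {p : R[X]} {k : ℕ} (hp : p.natDegree ≤ k + 1) (r : R) :
    (taylor r p).coeff k = p.coeff k + (k + 1) * r * p.coeff (k + 1) := by
  have hdeg : (hasseDeriv k p).natDegree ≤ 1 := (natDegree_hasseDeriv_le p k).trans (by omega)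
  rw [taylor_coeff, eval_eq_sum_range' (n := 2) (by omega)]
  simp only [Finset.sum_range_succ, Finset.sum_range_zero, pow_zero, pow_one, mul_one, zero_add]
  rw [coeff_hasseDeriv_one, coeff_derivative, hasseDeriv_coeff, zero_add, Nat.choose_self]
  push_cast
  ring

theorem natDegree_iterate_sub_iterate_derivative_le (L : R[X] → R[X])
    (hL : ∀ p, (L p - derivative p).natDegree ≤ p.natDegree - 3) (n : ℕ) (p : R[X]) :
    (L^[n] p - derivative^[n] p).natDegree ≤ p.natDegree - (n + 2) := by
  induction n generalizing p with
  | zero => simp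
  | succ n ih =>
    have hLp : (L p).natDegree ≤ p.natDegree - 1 := by
      rw [← sub_add_cancel (L p) (derivative p)]
      exact (natDegree_add_le _ _).trans
        (max_le ((hL p).trans (by omega)) (natDegree_derivative_le p))
    have hsplit : L^[n + 1] p - derivative^[n + 1] p =
        (L^[n] (L p) - derivative^[n] (L p)) + derivative^[n] (L p - derivative p) := by
      rw [Function.iterate_succ_apply, Function.iterate_succ_apply, iterate_map_sub]
      ring
    rw [hsplit]
    refine (natDegree_add_le _ _).trans (max_le ((ih (L p)).trans (by omega)) ?_)
    exact (natDegree_iterate_derivative _ n).trans (by have := hL p; omega)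

theorem coeff_X_pow_add_sum_fin (m : ℕ) {k j : ℕ} (a : Fin k → R) (hj : k ≤ j) :
    (X ^ m + ∑ i : Fin k, C (a i) * X ^ (i : ℕ)).coeff j = if j = m then 1 else 0 := by
  rw [coeff_add, coeff_X_pow, coeff_eq_zero_of_degree_lt ((degree_sum_fin_lt a).trans_le
    (by exact_mod_cast hj)), add_zero]

end CommRing

theorem natDegree_centralDiff_half_sub_le {K : Type*} [Field K] [NeZero (2 : K)] (p : K[X]) :
    (centralDiff (1 / 2) p - derivative p).natDegree ≤ p.natDegree - 3 := by
  have h := natDegree_centralDiff_sub_le (1 / 2 : K) p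
  rwa [mul_one_div_cancel two_ne_zero, C_1, one_mul] at h

section CharZero

variable {R : Type*} [CommRing R] [IsDomain R] [CharZero R]

theorem coeff_add_eq_of_coeff_iterate_derivative_eq {p g : R[X]} {n k : ℕ}
    (h : (derivative^[n] p).coeff k = (derivative^[n] g).coeff k) :
    p.coeff (k + n) = g.coeff (k + n) := by
  rw [coeff_iterate_derivative, coeff_iterate_derivative, nsmul_eq_mul, nsmul_eq_mul] at h
  refine mul_left_cancel₀ ?_ h
  exact Nat.cast_ne_zero.mpr (Nat.descFactorial_eq_zero_iff_lt.not.mpr (by omega))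

theorem coeff_eq_of_iterate_eq_iterate_derivative (L : R[X] → R[X])
    (hL : ∀ p, (L p - derivative p).natDegree ≤ p.natDegree - 3) {p g : R[X]} {n k : ℕ}
    (hk : p.natDegree - (n + 2) < k) (h : L^[n] p = derivative^[n] g) :
    p.coeff (k + n) = g.coeff (k + n) := by
  refine coeff_add_eq_of_coeff_iterate_derivative_eq ?_
  rw [← h, eq_comm, ← sub_eq_zero, ← coeff_sub]
  exact coeff_eq_zero_of_natDegree_lt <|
    (natDegree_iterate_sub_iterate_derivative_le L hL n p).trans_lt hk

end CharZero

end Polynomial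

theorem w_top_coeffs (n m : ℕ) (hn : 1 ≤ n) (hm : 2 ≤ m) (ζc : Fin (m - 1) → ℂ)
    (ζ : ℂ[X]) (hζ : ζ = X ^ m + ∑ i : Fin (m - 1), C (ζc i) * X ^ (i.val))
    (f w : ℂ[X])
    (hf : f - f.comp (X - 1) = (⇑derivative)^[n] (X ^ n * ζ))
    (hw : w.degree ≤ m)
    (Δ : ℂ[X] → ℂ[X])
    (hΔ : ∀ p : ℂ[X], Δ p = p.comp (X + C (1 / 2 : ℂ)) - p.comp (X - C (1 / 2 : ℂ)))
    (hfw : Δ^[n - 1] (X ^ n * w) = f) :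
    w.coeff m = 1 ∧ w.coeff (m - 1) = (n + m : ℂ) / 2 := by
  have hΔ' : Δ = centralDiff (1 / 2) := by
    ext1 p
    rw [hΔ, centralDiff, taylor_apply, taylor_apply, C_neg, ← sub_eq_add_neg]
  subst hΔ'
  have hP : (X ^ n * w).natDegree ≤ m + n := natDegree_mul_le.trans <| by
    have := natDegree_le_iff_degree_le.mpr hw
    have := natDegree_X_pow_le (R := ℂ) n
    omega
  have hPζ : (centralDiff (1 / 2))^[n] (taylor (-(1 / 2)) (X ^ n * w)) =
      derivative^[n] (X ^ n * ζ) := by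
    rw [((centralDiff_commute_taylor _ _).iterate_left n) _, ← Nat.sub_add_cancel hn,
      Function.iterate_succ_apply', Nat.sub_add_cancel hn, hfw, taylor_neg_centralDiff, ← hf]
    norm_num [taylor_apply, ← sub_eq_add_neg]
  have htop : ∀ k, m - 1 ≤ k →
      (taylor (-(1 / 2)) (X ^ n * w)).coeff (k + n) = ζ.coeff k := fun k hk => by
    rw [coeff_eq_of_iterate_eq_iterate_derivative _
      natDegree_centralDiff_half_sub_le (by rw [natDegree_taylor]; omega) hPζ,
      coeff_X_pow_mul]
  have hwm : w.coeff m = 1 := by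
    have h := htop m (by omega)
    rwa [coeff_taylor_of_natDegree_le hP, coeff_X_pow_mul, hζ,
      coeff_X_pow_add_sum_fin m _ (by omega), if_pos rfl] at h
  have h := htop (m - 1) le_rfl
  rw [coeff_taylor_of_natDegree_le_succ (by omega), coeff_X_pow_mul,
    show m - 1 + n + 1 = m + n by omega, coeff_X_pow_mul, hwm, hζ,
    coeff_X_pow_add_sum_fin m _ le_rfl, if_neg (by omega), Nat.cast_add,
    Nat.cast_sub (by omega : 1 ≤ m)] at h
  refine ⟨hwm, ?_⟩
  linear_combination h
end
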